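/- For any POVM element E on the joint space (0 ≤ E ≤ I), with ψ and φ as above, |Tr(E(ψ − φ))| ≤ (1/4)(|Tr(E((|Φ⁺⟩⟨Φ⁺|)⊗(ρ₀−ρ₁)))| + |Tr(E((|Φ⁻⟩⟨Φ⁻|)⊗(ρ₀−ρ₁)))|) ≤ (1/2)·TD(ρ₀, ρ₁). Hence any distinguisher's advantage on (ψ, φ) is at most half its maximal advantage on (ρ₀, ρ₁). -/

import Mathlib

/-
ψ − φ = ¼ (|Φ⁻⟩⟨Φ⁻| − |Φ⁺⟩⟨Φ⁺|) ⊗ (ρ₀ − ρ₁), so the first inequality is the triangle inequality.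
For a unit vector `v`, compressing `E` along the isometry `x ↦ v ⊗ x` gives a POVM element `E_v`
on `H` with `Tr(E (|v⟩⟨v| ⊗ X)) = Tr(E_v X)`, so each Bell term is a single measurement advantage
on `(ρ₀, ρ₁)`, which is at most `TD(ρ₀, ρ₁)` by Helstrom's bound.
-/

open Matrix
open scoped Kronecker ComplexOrder

open Classical in
noncomputable def matSqrt {d : Type*} [Fintype d] [DecidableEq d]
    (A : Matrix d d ℂ) : Matrix d d ℂ :=
  if h : A.PosSemidef then
    (h.1.eigenvectorUnitary : Matrix d d ℂ) * diagonal ((↑) ∘ (√·) ∘ h.1.eigenvalues) *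
      (star h.1.eigenvectorUnitary : Matrix d d ℂ) else 0

noncomputable def traceNorm {d : Type*} [Fintype d] [DecidableEq d]
    (A : Matrix d d ℂ) : ℝ :=
  (matSqrt (Aᴴ * A)).trace.re

noncomputable def traceDist {d : Type*} [Fintype d] [DecidableEq d]
    (ρ σ : Matrix d d ℂ) : ℝ :=
  traceNorm (ρ - σ) / 2

noncomputable def fidelity {d : Type*} [Fintype d] [DecidableEq d]
    (ρ σ : Matrix d d ℂ) : ℝ :=
  ((matSqrt (matSqrt ρ * σ * matSqrt ρ)).trace.re) ^ 2

def IsDensity {d : Type*} [Fintype d] [DecidableEq d]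
    (ρ : Matrix d d ℂ) : Prop :=
  ρ.PosSemidef ∧ ρ.trace = 1

def IsPOVMElem {d : Type*} [Fintype d] [DecidableEq d]
    (E : Matrix d d ℂ) : Prop :=
  E.PosSemidef ∧ (1 - E).PosSemidef

noncomputable def tensorPow {d : Type*} [Fintype d] [DecidableEq d]
    (ρ : Matrix d d ℂ) (q : ℕ) : Matrix (Fin q → d) (Fin q → d) ℂ :=
  fun x y => ∏ i, ρ (x i) (y i)

noncomputable def ketPhiPlus : Fin 2 × Fin 2 → ℂ :=
  fun p => if p.1 = p.2 then (((Real.sqrt 2 : ℝ) : ℂ))⁻¹ else 0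

noncomputable def ketPhiMinus : Fin 2 × Fin 2 → ℂ :=
  fun p => if p = (0, 0) then (((Real.sqrt 2 : ℝ) : ℂ))⁻¹
    else if p = (1, 1) then -(((Real.sqrt 2 : ℝ) : ℂ))⁻¹ else 0

noncomputable def outerProj {α : Type*} (v : α → ℂ) : Matrix α α ℂ :=
  Matrix.vecMulVec v (star v)

noncomputable def bellPlus : Matrix (Fin 2 × Fin 2) (Fin 2 × Fin 2) ℂ :=
  outerProj ketPhiPlus

noncomputable def bellMinus : Matrix (Fin 2 × Fin 2) (Fin 2 × Fin 2) ℂ :=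
  outerProj ketPhiMinus


open scoped MatrixOrder

lemma Complex.norm_sub_half_le_of_mem_Icc {z : ℂ} (hz : z ∈ Set.Icc 0 1) : ‖z - 1/2‖ ≤ 1/2 := by
  obtain ⟨h0, h1⟩ := hz
  obtain ⟨x, rfl⟩ : ∃ x : ℝ, (x : ℂ) = z := ⟨z.re, Complex.ext rfl (Complex.nonneg_iff.1 h0).2⟩
  rw [Complex.zero_le_real] at h0
  rw [← Complex.ofReal_one, Complex.real_le_real] at h1
  rw [show (x : ℂ) - 1/2 = ((x - 1/2 : ℝ) : ℂ) by push_cast; ring, Complex.norm_real,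
    Real.norm_eq_abs, abs_le]
  constructor <;> linarith

lemma norm_sum_mul_le_half_sum_abs {ι : Type*} [Fintype ι] {g : ι → ℂ}
    (hg : ∀ i, g i ∈ Set.Icc 0 1) {μ : ι → ℝ} (hμ : ∑ i, μ i = 0) :
    ‖∑ i, g i * μ i‖ ≤ (∑ i, |μ i|) / 2 := by
  have hshift : ∑ i, g i * μ i = ∑ i, (g i - 1/2) * μ i := by
    simp only [sub_mul, Finset.sum_sub_distrib, ← Finset.mul_sum, ← Complex.ofReal_sum, hμ]
    simp
  calc ‖∑ i, g i * μ i‖ ≤ ∑ i, ‖g i - 1/2‖ * |μ i| := by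
        rw [hshift]
        refine (norm_sum_le _ _).trans_eq (Finset.sum_congr rfl fun i _ => ?_)
        rw [norm_mul, Complex.norm_real, Real.norm_eq_abs]
    _ ≤ ∑ i, 1/2 * |μ i| := by
        gcongr with i
        exact Complex.norm_sub_half_le_of_mem_Icc (hg i)
    _ = (∑ i, |μ i|) / 2 := by rw [← Finset.mul_sum]; ring

section Helstrom

variable {n : Type*} [Fintype n] [DecidableEq n]

lemma matSqrt_eq_cfcSqrt {A : Matrix n n ℂ} (hA : A.PosSemidef) : matSqrt A = CFC.sqrt A := by
  rw [matSqrt, dif_pos hA, CFC.sqrt_eq_real_sqrt _ hA.nonneg, cfcₙ_eq_cfc (hf0 := Real.sqrt_zero),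
    hA.1.cfc_eq, IsHermitian.cfc, Unitary.conjStarAlgAut_apply]
  rfl

lemma traceNorm_eq_sum_abs_eigenvalues {A : Matrix n n ℂ} (hA : A.IsHermitian) :
    traceNorm A = ∑ i, |hA.eigenvalues i| := by
  rw [traceNorm, matSqrt_eq_cfcSqrt (posSemidef_conjTranspose_mul_self A), ← star_eq_conjTranspose,
    ← CFC.abs, CFC.abs_eq_cfc_norm A hA.isSelfAdjoint, hA.cfc_eq, IsHermitian.cfc,
    Unitary.conjStarAlgAut_apply, trace_mul_cycle, Unitary.star_mul_self_of_mem (SetLike.coe_mem _),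
    one_mul, trace_diagonal]
  simp

lemma trace_mul_eq_sum_eigenvalues (F : Matrix n n ℂ) {A : Matrix n n ℂ} (hA : A.IsHermitian) :
    (F * A).trace = ∑ i, (star (hA.eigenvectorUnitary : Matrix n n ℂ) * F *
      (hA.eigenvectorUnitary : Matrix n n ℂ)) i i * hA.eigenvalues i := by
  conv_lhs => rw [hA.spectral_theorem, Unitary.conjStarAlgAut_apply]
  rw [← mul_assoc, trace_mul_cycle, ← mul_assoc]
  simp [trace, mul_diagonal]

lemma IsPOVMElem.conjTranspose_mul_mul_same {m : Type*} [Fintype m] [DecidableEq m]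
    {E : Matrix m m ℂ} (hE : IsPOVMElem E) {V : Matrix m n ℂ} (hV : Vᴴ * V = 1) :
    IsPOVMElem (Vᴴ * E * V) := by
  refine ⟨hE.1.conjTranspose_mul_mul_same V, ?_⟩
  have h : 1 - Vᴴ * E * V = Vᴴ * (1 - E) * V := by
    rw [Matrix.mul_sub, Matrix.sub_mul, Matrix.mul_one, hV]
  exact h ▸ hE.2.conjTranspose_mul_mul_same V

lemma IsPOVMElem.diag_mem_Icc {E : Matrix n n ℂ} (hE : IsPOVMElem E) (i : n) :
    E i i ∈ Set.Icc 0 1 := by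
  have h := hE.2.diag_nonneg (i := i)
  rw [Matrix.sub_apply, one_apply_eq, sub_nonneg] at h
  exact ⟨hE.1.diag_nonneg, h⟩

/-- Helstrom's bound: in an eigenbasis of `Δ` the diagonal of `F` lies in `[0, 1]` and the
eigenvalues of `Δ` sum to zero. -/
lemma IsPOVMElem.norm_trace_mul_le_half_traceNorm {F Δ : Matrix n n ℂ} (hF : IsPOVMElem F)
    (hΔ : Δ.IsHermitian) (htr : Δ.trace = 0) : ‖(F * Δ).trace‖ ≤ traceNorm Δ / 2 := by
  have hU : (hΔ.eigenvectorUnitary : Matrix n n ℂ)ᴴ * hΔ.eigenvectorUnitary = 1 :=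
    Unitary.star_mul_self_of_mem hΔ.eigenvectorUnitary.2
  have hsum : ∑ i, hΔ.eigenvalues i = 0 := by
    simpa [htr, eq_comm] using congrArg Complex.re hΔ.trace_eq_sum_eigenvalues
  rw [trace_mul_eq_sum_eigenvalues F hΔ, traceNorm_eq_sum_abs_eigenvalues hΔ]
  exact norm_sum_mul_le_half_sum_abs (hF.conjTranspose_mul_mul_same hU).diag_mem_Icc hsum

lemma IsPOVMElem.norm_trace_mul_sub_le_traceDist {F ρ σ : Matrix n n ℂ} (hF : IsPOVMElem F)
    (hρ : IsDensity ρ) (hσ : IsDensity σ) : ‖(F * (ρ - σ)).trace‖ ≤ traceDist ρ σ :=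
  hF.norm_trace_mul_le_half_traceNorm (hρ.1.1.sub hσ.1.1) (by rw [trace_sub, hρ.2, hσ.2, sub_self])

end Helstrom

/-- The isometry `x ↦ v ⊗ x`. -/
def ketTensorOne (n : Type*) [DecidableEq n] {α : Type*} (v : α → ℂ) : Matrix (α × n) n ℂ :=
  Matrix.of fun p j => if p.2 = j then v p.1 else 0

section ketTensorOne

variable {n α : Type*} [Fintype n] [DecidableEq n] [Fintype α]

lemma ketTensorOne_conjTranspose_mul_self {v : α → ℂ} (hv : star v ⬝ᵥ v = 1) :
    (ketTensorOne n v)ᴴ * ketTensorOne n v = 1 := by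
  ext i j
  simp only [mul_apply, conjTranspose_apply, ketTensorOne, of_apply, Fintype.sum_prod_type]
  by_cases h : i = j
  · subst h
    simpa [dotProduct] using hv
  · simp [one_apply, h, Ne.symm h]

omit [Fintype α] in
lemma ketTensorOne_mul_mul_conjTranspose (v : α → ℂ) (X : Matrix n n ℂ) :
    ketTensorOne n v * X * (ketTensorOne n v)ᴴ = outerProj v ⊗ₖ X := by
  ext i j
  simp only [mul_apply, conjTranspose_apply, ketTensorOne, of_apply, ite_mul, zero_mul,
    Finset.mem_univ, if_true, apply_ite (star : ℂ → ℂ), star_zero, mul_ite,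
    mul_zero, Finset.sum_ite_eq, outerProj, kroneckerMap_apply, vecMulVec_apply, Pi.star_apply]
  ring

lemma trace_mul_outerProj_kronecker (v : α → ℂ) (E : Matrix (α × n) (α × n) ℂ)
    (X : Matrix n n ℂ) :
    (E * (outerProj v ⊗ₖ X)).trace = ((ketTensorOne n v)ᴴ * E * ketTensorOne n v * X).trace := by
  rw [← ketTensorOne_mul_mul_conjTranspose, ← Matrix.mul_assoc, trace_mul_comm]
  simp only [Matrix.mul_assoc]

lemma IsPOVMElem.norm_trace_mul_outerProj_kronecker_le [DecidableEq α] {v : α → ℂ}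
    (hv : star v ⬝ᵥ v = 1) {E : Matrix (α × n) (α × n) ℂ} (hE : IsPOVMElem E)
    {ρ σ : Matrix n n ℂ} (hρ : IsDensity ρ) (hσ : IsDensity σ) :
    ‖(E * (outerProj v ⊗ₖ (ρ - σ))).trace‖ ≤ traceDist ρ σ := by
  rw [trace_mul_outerProj_kronecker]
  exact (hE.conjTranspose_mul_mul_same (ketTensorOne_conjTranspose_mul_self hv)
    ).norm_trace_mul_sub_le_traceDist hρ hσ

end ketTensorOne

lemma inv_sqrt_two_mul_self : ((√2 : ℝ) : ℂ)⁻¹ * ((√2 : ℝ) : ℂ)⁻¹ = 1 / 2 := by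
  rw [← mul_inv, ← Complex.ofReal_mul, Real.mul_self_sqrt zero_le_two]
  norm_num

lemma star_ketPhiPlus_dotProduct : star ketPhiPlus ⬝ᵥ ketPhiPlus = 1 := by
  norm_num [dotProduct, Fintype.sum_prod_type, ketPhiPlus, inv_sqrt_two_mul_self]

lemma star_ketPhiMinus_dotProduct : star ketPhiMinus ⬝ᵥ ketPhiMinus = 1 := by
  norm_num [dotProduct, Fintype.sum_prod_type, ketPhiMinus, inv_sqrt_two_mul_self]

lemma kronecker_mixture_sub_eq {α n : Type*} (P M : Matrix α α ℂ) (ρ σ : Matrix n n ℂ) :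
    (1/4 : ℂ) • ((P + M) ⊗ₖ (ρ + σ)) - (1/2 : ℂ) • (P ⊗ₖ ρ + M ⊗ₖ σ)
      = (1/4 : ℂ) • (M ⊗ₖ (ρ - σ)) - (1/4 : ℂ) • (P ⊗ₖ (ρ - σ)) := by
  ext i j
  simp only [Matrix.sub_apply, Matrix.smul_apply, Matrix.add_apply, kroneckerMap_apply, smul_eq_mul]
  ring

theorem stmt_10 {d : Type*} [Fintype d] [DecidableEq d]
    (ρ₀ ρ₁ : Matrix d d ℂ) (h₀ : IsDensity ρ₀) (h₁ : IsDensity ρ₁)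
    (E : Matrix ((Fin 2 × Fin 2) × d) ((Fin 2 × Fin 2) × d) ℂ) (hE : IsPOVMElem E) :
    ‖(E * ((1/4 : ℂ) • ((bellPlus + bellMinus) ⊗ₖ (ρ₀ + ρ₁))
          - (1/2 : ℂ) • (bellPlus ⊗ₖ ρ₀ + bellMinus ⊗ₖ ρ₁))).trace‖
      ≤ (1/4) * (‖(E * (bellPlus ⊗ₖ (ρ₀ - ρ₁))).trace‖
          + ‖(E * (bellMinus ⊗ₖ (ρ₀ - ρ₁))).trace‖) ∧
    (1/4) * (‖(E * (bellPlus ⊗ₖ (ρ₀ - ρ₁))).trace‖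
          + ‖(E * (bellMinus ⊗ₖ (ρ₀ - ρ₁))).trace‖)
      ≤ (1/2) * traceDist ρ₀ ρ₁ := by
  set tPlus := (E * (bellPlus ⊗ₖ (ρ₀ - ρ₁))).trace
  set tMinus := (E * (bellMinus ⊗ₖ (ρ₀ - ρ₁))).trace
  constructor
  · rw [kronecker_mixture_sub_eq, Matrix.mul_sub, Matrix.mul_smul, Matrix.mul_smul, trace_sub,
      trace_smul, trace_smul, ← smul_sub, norm_smul]
    calc ‖(1/4 : ℂ)‖ * ‖tMinus - tPlus‖ ≤ 1/4 * (‖tMinus‖ + ‖tPlus‖) := by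
          norm_num [norm_sub_le]
      _ = 1/4 * (‖tPlus‖ + ‖tMinus‖) := by rw [add_comm]
  · have hPlus : ‖tPlus‖ ≤ traceDist ρ₀ ρ₁ :=
      hE.norm_trace_mul_outerProj_kronecker_le star_ketPhiPlus_dotProduct h₀ h₁
    have hMinus : ‖tMinus‖ ≤ traceDist ρ₀ ρ₁ :=
      hE.norm_trace_mul_outerProj_kronecker_le star_ketPhiMinus_dotProduct h₀ h₁
    linarith
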